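/- arXiv:1704.05339 — 2 statements merged into one kernel-verified Lean document; each statement's English description precedes it below -/
import Mathlib

section
/- Let u : B₁ → ℝᵈ be measurable and satisfy (u(x)−u(y))·(x−y) ≥ −|x−y|² for a.e. x, y ∈ B₁. Then for a.e. x₀ ∈ B_{3/4}, |u(x₀)| ≤ C(d) ( ∫_{B₁} |u|² )^{1/(d+2)} + C(d) ( ∫_{B₁} |u|² )^{1/2}, and in particular if ∫_{B₁}|u|² ≤ 1 then |u(x₀)| ≤ C(d) ( ∫_{B₁} |u|² )^{1/(d+2)}. -/
/-!
Fix `x₀` at which monotonicity holds against a.e. `x`, and let `e = u x₀ / ‖u x₀‖`. On the ball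
`B` of radius `r / 2` around `x₀ + r • e` one has `(r / 2) ‖u x₀‖ ≤ ⟪u x₀, x - x₀⟫ ≤
⟪u x, x - x₀⟫ + ‖x - x₀‖²`, hence `‖u x₀‖ ≤ 3 ‖u x‖ + 5 r ≤ ‖u x‖² / ε + 3 ε + 5 r`. Averaging over
`B`, whose volume is of order `r ^ d`, gives `‖u x₀‖ ≲ (∫ ‖u‖²) / (ε r ^ d) + ε + r`. When
`A = ∫ ‖u‖²` is small take `r = ε ↓ A ^ (1 / (d + 2))`; otherwise take `r = 1 / 8`, `ε = √A`.
-/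

open MeasureTheory Metric Module

section Geometry

variable {E : Type*} [NormedAddCommGroup E] [InnerProductSpace ℝ E]

theorem norm_le_of_neg_sq_le_inner {v w x₀ x : E} {r : ℝ} (hr : 0 < r)
    (hx : dist x (x₀ + r • ‖v‖⁻¹ • v) < r / 2)
    (h : -‖x₀ - x‖ ^ 2 ≤ inner ℝ (v - w) (x₀ - x)) :
    ‖v‖ ≤ 3 * ‖w‖ + 5 * r := by
  rcases eq_or_ne v 0 with rfl | hv
  · simp only [norm_zero]; positivity
  set e := ‖v‖⁻¹ • v
  have hve : inner ℝ v e = ‖v‖ := by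
    rw [real_inner_smul_right, real_inner_self_eq_norm_sq]
    field_simp
  set y := x - (x₀ + r • e)
  have hy : ‖y‖ < r / 2 := by rwa [← dist_eq_norm]
  have hxy : x - x₀ = y + r • e := by simp only [y]; abel
  have hdist : ‖x - x₀‖ ≤ 3 / 2 * r := by
    rw [hxy]
    calc ‖y + r • e‖ ≤ ‖y‖ + ‖r • e‖ := norm_add_le _ _
      _ ≤ r / 2 + r := by
        rw [norm_smul, norm_smul, norm_inv, norm_norm, inv_mul_cancel₀ (norm_ne_zero_iff.2 hv),
          Real.norm_of_nonneg hr.le, mul_one]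
        linarith
      _ = 3 / 2 * r := by ring
  have lower : r / 2 * ‖v‖ ≤ inner ℝ v (x - x₀) := by
    rw [hxy, inner_add_right, real_inner_smul_right, hve]
    have := neg_le_of_abs_le (abs_real_inner_le_norm v y)
    nlinarith [norm_nonneg v]
  have upper : inner ℝ v (x - x₀) ≤ ‖w‖ * (3 / 2 * r) + (3 / 2 * r) ^ 2 := by
    have hswap : inner ℝ (v - w) (x₀ - x) = inner ℝ w (x - x₀) - inner ℝ v (x - x₀) := by
      rw [← neg_sub x x₀, inner_neg_right, inner_sub_left]; ring
    have hw := (real_inner_le_norm w (x - x₀)).trans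
      (mul_le_mul_of_nonneg_left hdist (norm_nonneg w))
    have hsq := pow_le_pow_left₀ (norm_nonneg _) hdist 2
    rw [hswap, norm_sub_rev] at h
    linarith
  nlinarith [norm_nonneg w]

end Geometry

section Averaging

variable {X : Type*} [MeasurableSpace X] {μ : Measure X}

theorem le_setIntegral_div_measureReal_add {s t : Set X} {f : X → ℝ} {N c : ℝ}
    (hs : MeasurableSet s) (hμs : 0 < μ.real s) (hst : s ⊆ t)
    (hf : IntegrableOn f t μ) (hf₀ : 0 ≤ᵐ[μ.restrict t] f)
    (h : ∀ᵐ x ∂μ, x ∈ s → N ≤ f x + c) :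
    N ≤ (∫ x in t, f x ∂μ) / μ.real s + c := by
  have hmean : (N - c) * μ.real s ≤ ∫ x in s, f x ∂μ := by
    rw [mul_comm, ← smul_eq_mul, ← setIntegral_const]
    refine setIntegral_mono_on_ae (integrableOn_const (ENNReal.toReal_pos_iff.1 hμs).2.ne) (hf.mono_set hst) hs ?_
    filter_upwards [h] with x hx hxs
    linarith [hx hxs]
  have hsub : ∫ x in s, f x ∂μ ≤ ∫ x in t, f x ∂μ :=
    setIntegral_mono_set hf hf₀ hst.eventuallyLE
  rw [← sub_le_iff_le_add, le_div_iff₀ hμs]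
  linarith

end Averaging

section HaarAverage

variable {E : Type*} [NormedAddCommGroup E] [InnerProductSpace ℝ E] [FiniteDimensional ℝ E]
  [MeasurableSpace E] [BorelSpace E] (μ : Measure E) [μ.IsAddHaarMeasure]

theorem norm_le_of_ae_neg_sq_le_inner {u : E → E} {Ω : Set E} {x₀ : E} {r ε : ℝ}
    (hr : 0 < r) (hε : 0 < ε) (hΩ : ball x₀ (2 * r) ⊆ Ω)
    (hu : IntegrableOn (fun x => ‖u x‖ ^ 2) Ω μ)
    (hmono : ∀ᵐ x ∂μ, x ∈ Ω → -‖x₀ - x‖ ^ 2 ≤ inner ℝ (u x₀ - u x) (x₀ - x)) :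
    ‖u x₀‖ ≤ (∫ x in Ω, ‖u x‖ ^ 2 ∂μ) / (ε * ((r / 2) ^ finrank ℝ E * μ.real (ball 0 1)))
      + 3 * ε + 5 * r := by
  set B := ball (x₀ + r • ‖u x₀‖⁻¹ • u x₀) (r / 2)
  have hBΩ : B ⊆ Ω := by
    refine (ball_subset_ball' ?_).trans hΩ
    rw [dist_self_add_left, norm_smul, norm_smul, norm_inv, norm_norm, Real.norm_of_nonneg hr.le]
    have := mul_le_of_le_one_right hr.le (inv_mul_le_one_of_le₀ le_rfl (norm_nonneg (u x₀)))
    linarith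
  have hpointwise : ∀ᵐ x ∂μ, x ∈ B → ‖u x₀‖ ≤ ‖u x‖ ^ 2 / ε + (3 * ε + 5 * r) := by
    filter_upwards [hmono] with x hx hxB
    have hyoung : 3 * ‖u x‖ ≤ ‖u x‖ ^ 2 / ε + 3 * ε := by
      rw [div_add' _ _ _ hε.ne', le_div_iff₀ hε]
      nlinarith [sq_nonneg (‖u x‖ - 3 / 2 * ε)]
    linarith [norm_le_of_neg_sq_le_inner hr hxB (hx (hBΩ hxB))]
  have hvol : μ.real B = (r / 2) ^ finrank ℝ E * μ.real (ball 0 1) := by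
    rw [measureReal_def, Measure.addHaar_ball_of_pos μ _ (half_pos hr), ENNReal.toReal_mul,
      ENNReal.toReal_ofReal (by positivity), measureReal_def]
  have hB₀ : 0 < μ.real B :=
    ENNReal.toReal_pos (measure_ball_pos μ _ (half_pos hr)).ne' measure_ball_lt_top.ne
  have := le_setIntegral_div_measureReal_add measurableSet_ball hB₀ hBΩ
    (hu.div_const ε) (ae_of_all _ fun x => by positivity) hpointwise
  rw [integral_div, hvol, div_div] at this
  linarith

end HaarAverage

section Optimization

variable {d : ℕ} {ω A N : ℝ}

theorem rpow_one_div_add_two_pow (hA : 0 ≤ A) : (A ^ (1 / ((d : ℝ) + 2))) ^ (d + 2) = A := by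
  have := Real.rpow_inv_natCast_pow hA (n := d + 2) (by omega)
  rwa [Nat.cast_add, Nat.cast_two, ← one_div] at this

theorem le_mul_rpow_of_forall_le_of_small (hω : 0 < ω) (hA : 0 ≤ A)
    (hs : A ^ (1 / ((d : ℝ) + 2)) < 1 / 8)
    (h : ∀ r ε : ℝ, 0 < r → r ≤ 1 / 8 → 0 < ε →
      N ≤ A / (ε * ((r / 2) ^ d * ω)) + 3 * ε + 5 * r) :
    N ≤ (2 ^ d / ω + 8) * A ^ (1 / ((d : ℝ) + 2)) := by
  set s := A ^ (1 / ((d : ℝ) + 2))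
  have hs₀ : 0 ≤ s := Real.rpow_nonneg hA _
  have hbound : ∀ r ∈ Set.Ioo s (1 / 8), N ≤ (2 ^ d / ω + 8) * r := by
    rintro r ⟨hsr, hr8⟩
    have hr : 0 < r := hs₀.trans_lt hsr
    have hAr : A ≤ r ^ (d + 2) :=
      rpow_one_div_add_two_pow hA ▸ pow_le_pow_left₀ hs₀ hsr.le _
    have hmain : A / (r * ((r / 2) ^ d * ω)) ≤ 2 ^ d / ω * r := by
      rw [div_le_iff₀ (by positivity)]
      calc A ≤ r ^ (d + 2) := hAr
        _ = 2 ^ d / ω * r * (r * ((r / 2) ^ d * ω)) := by rw [div_pow]; field_simp; ring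
    linarith [h r r hr hr8.le hr]
  have hlim : Filter.Tendsto (fun r => (2 ^ d / ω + 8) * r) (nhdsWithin s (Set.Ioi s))
      (nhds ((2 ^ d / ω + 8) * s)) :=
    ((continuous_const.mul continuous_id).tendsto s).mono_left nhdsWithin_le_nhds
  exact ge_of_tendsto hlim (Filter.eventually_of_mem (Ioo_mem_nhdsGT hs) hbound)

theorem le_mul_sqrt_add_of_forall_le_of_large (hA : 0 ≤ A)
    (hs : 1 / 8 ≤ A ^ (1 / ((d : ℝ) + 2)))
    (h : ∀ r ε : ℝ, 0 < r → r ≤ 1 / 8 → 0 < ε →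
      N ≤ A / (ε * ((r / 2) ^ d * ω)) + 3 * ε + 5 * r) :
    N ≤ (16 ^ d / ω + 3) * √A + 5 * A ^ (1 / ((d : ℝ) + 2)) := by
  have hA₀ : 0 < A := by
    refine hA.lt_of_ne' fun hA₀ => ?_
    rw [hA₀, Real.zero_rpow (by positivity)] at hs
    norm_num at hs
  have hsqrt : A / (√A * ((1 / 8 / 2) ^ d * ω)) = 16 ^ d / ω * √A := by
    rw [show (1 / 8 / 2 : ℝ) = 16⁻¹ by norm_num, inv_pow]
    nth_rewrite 1 [← Real.mul_self_sqrt hA]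
    field_simp
  have := h (1 / 8) (√A) (by norm_num) le_rfl (Real.sqrt_pos.2 hA₀)
  rw [hsqrt] at this
  linarith

theorem le_rpow_of_forall_le (hω : 0 < ω) (hA : 0 ≤ A)
    (h : ∀ r ε : ℝ, 0 < r → r ≤ 1 / 8 → 0 < ε →
      N ≤ A / (ε * ((r / 2) ^ d * ω)) + 3 * ε + 5 * r) :
    (N ≤ (16 ^ d / ω + 8) * A ^ (1 / ((d : ℝ) + 2)) + (16 ^ d / ω + 8) * A ^ (1 / (2 : ℝ))) ∧
      (A ≤ 1 → N ≤ (16 ^ d / ω + 8) * A ^ (1 / ((d : ℝ) + 2))) := by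
  rw [← Real.sqrt_eq_rpow]
  set s := A ^ (1 / ((d : ℝ) + 2))
  have hs₀ : 0 ≤ s := Real.rpow_nonneg hA _
  have hb₀ : 0 ≤ √A := Real.sqrt_nonneg A
  have hK : 0 ≤ 16 ^ d / ω := by positivity
  rcases lt_or_ge s (1 / 8) with hsmall | hlarge
  · have hN := le_mul_rpow_of_forall_le_of_small hω hA hsmall h
    have h2 : 2 ^ d / ω ≤ 16 ^ d / ω :=
      div_le_div_of_nonneg_right (pow_le_pow_left₀ (by norm_num) (by norm_num) d) hω.le
    have hNs : N ≤ (16 ^ d / ω + 8) * s := hN.trans (by gcongr)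
    exact ⟨by nlinarith, fun _ => hNs⟩
  · have hN := le_mul_sqrt_add_of_forall_le_of_large hA hlarge h
    refine ⟨by nlinarith, fun hA₁ => ?_⟩
    have hbs : √A ≤ s := by
      rw [Real.sqrt_eq_rpow]
      exact Real.rpow_le_rpow_of_exponent_ge' hA hA₁ (by positivity)
        (one_div_le_one_div_of_le two_pos (by linarith [d.cast_nonneg (α := ℝ)]))
    nlinarith

end Optimization

theorem stmt10_general (d : ℕ) :
    ∃ C : ℝ, 0 < C ∧
      ∀ u : EuclideanSpace ℝ (Fin d) → EuclideanSpace ℝ (Fin d),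
        AEMeasurable u →
        Integrable (fun x => ‖u x‖ ^ 2)
          (volume.restrict (Metric.ball (0 : EuclideanSpace ℝ (Fin d)) 1)) →
        (∀ᵐ p : EuclideanSpace ℝ (Fin d) × EuclideanSpace ℝ (Fin d) ∂(volume.prod volume),
          p.1 ∈ Metric.ball (0 : EuclideanSpace ℝ (Fin d)) 1 →
          p.2 ∈ Metric.ball (0 : EuclideanSpace ℝ (Fin d)) 1 →
          (inner ℝ (u p.1 - u p.2) (p.1 - p.2) : ℝ) ≥ -‖p.1 - p.2‖ ^ 2) →
        ∀ᵐ x₀ ∂volume, x₀ ∈ Metric.ball (0 : EuclideanSpace ℝ (Fin d)) (3/4) →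
          (‖u x₀‖ ≤
            C * (∫ x in Metric.ball (0 : EuclideanSpace ℝ (Fin d)) 1, ‖u x‖ ^ 2) ^
                  ((1 : ℝ) / ((d : ℝ) + 2)) +
            C * (∫ x in Metric.ball (0 : EuclideanSpace ℝ (Fin d)) 1, ‖u x‖ ^ 2) ^
                  ((1 : ℝ) / 2)) ∧
          ((∫ x in Metric.ball (0 : EuclideanSpace ℝ (Fin d)) 1, ‖u x‖ ^ 2) ≤ 1 →
            ‖u x₀‖ ≤
              C * (∫ x in Metric.ball (0 : EuclideanSpace ℝ (Fin d)) 1, ‖u x‖ ^ 2) ^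
                    ((1 : ℝ) / ((d : ℝ) + 2))) := by
  set ω := volume.real (ball (0 : EuclideanSpace ℝ (Fin d)) 1)
  have hω : 0 < ω :=
    ENNReal.toReal_pos (measure_ball_pos _ _ one_pos).ne' measure_ball_lt_top.ne
  refine ⟨16 ^ d / ω + 8, by positivity, fun u _ hu hmono => ?_⟩
  filter_upwards [Measure.ae_ae_of_ae_prod hmono] with x₀ hx₀ hx₀B
  refine le_rpow_of_forall_le hω (integral_nonneg fun _ => by positivity)
    fun r ε hr hr8 hε => ?_
  have hball : ball x₀ (2 * r) ⊆ ball 0 1 := by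
    refine ball_subset_ball' ?_
    rw [mem_ball] at hx₀B
    linarith
  have := norm_le_of_ae_neg_sq_le_inner volume hr hε hball hu
    (hx₀.mono fun x hx hxB => hx (ball_subset_ball (by norm_num) hx₀B) hxB)
  rwa [finrank_euclideanSpace_fin] at this

/-- `L^∞` bound for quantitatively monotone displacements: if
`(u(x)−u(y))·(x−y) ≥ −|x−y|²` for a.e. `x,y ∈ B₁`, then for a.e. `x₀ ∈ B_{3/4}`,
`|u(x₀)| ≤ C(d) (∫_{B₁}|u|²)^{1/(d+2)} + C(d) (∫_{B₁}|u|²)^{1/2}`, and if moreover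
`∫_{B₁}|u|² ≤ 1` then `|u(x₀)| ≤ C(d) (∫_{B₁}|u|²)^{1/(d+2)}`. -/
theorem stmt10 (d : ℕ) (hd : 1 ≤ d) :
    ∃ C : ℝ, 0 < C ∧
      ∀ u : EuclideanSpace ℝ (Fin d) → EuclideanSpace ℝ (Fin d),
        AEMeasurable u →
        Integrable (fun x => ‖u x‖ ^ 2)
          (volume.restrict (Metric.ball (0 : EuclideanSpace ℝ (Fin d)) 1)) →
        (∀ᵐ p : EuclideanSpace ℝ (Fin d) × EuclideanSpace ℝ (Fin d) ∂(volume.prod volume),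
          p.1 ∈ Metric.ball (0 : EuclideanSpace ℝ (Fin d)) 1 →
          p.2 ∈ Metric.ball (0 : EuclideanSpace ℝ (Fin d)) 1 →
          (inner ℝ (u p.1 - u p.2) (p.1 - p.2) : ℝ) ≥ -‖p.1 - p.2‖ ^ 2) →
        ∀ᵐ x₀ ∂volume, x₀ ∈ Metric.ball (0 : EuclideanSpace ℝ (Fin d)) (3/4) →
          (‖u x₀‖ ≤
            C * (∫ x in Metric.ball (0 : EuclideanSpace ℝ (Fin d)) 1, ‖u x‖ ^ 2) ^
                  ((1 : ℝ) / ((d : ℝ) + 2)) +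
            C * (∫ x in Metric.ball (0 : EuclideanSpace ℝ (Fin d)) 1, ‖u x‖ ^ 2) ^
                  ((1 : ℝ) / 2)) ∧
          ((∫ x in Metric.ball (0 : EuclideanSpace ℝ (Fin d)) 1, ‖u x‖ ^ 2) ≤ 1 →
            ‖u x₀‖ ≤
              C * (∫ x in Metric.ball (0 : EuclideanSpace ℝ (Fin d)) 1, ‖u x‖ ^ 2) ^
                    ((1 : ℝ) / ((d : ℝ) + 2))) :=
  stmt10_general d
end

section
/- Concavity consequence of det^{1/d}: for every symmetric positive semidefinite d×d matrix A and every t ∈ [0,1], det(t A + (1−t) Id) ≥ (det A)^t. -/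
/-!
Diagonalize `A` with eigenvalues `λᵢ ≥ 0`. Then `t • A + (1 - t) • 1` has eigenvalues
`t λᵢ + (1 - t)`, and `λᵢ ^ t ≤ t λᵢ + (1 - t)` is weighted AM–GM for `λᵢ` and `1`
(Bernoulli's inequality). Multiplying over `i` gives the claim, since both determinants are
products of eigenvalues.
-/

theorem Real.rpow_le_mul_add_one_sub {x t : ℝ} (hx : 0 ≤ x) (ht₀ : 0 ≤ t) (ht₁ : t ≤ 1) :
    x ^ t ≤ t * x + (1 - t) := by
  have := rpow_one_add_le_one_add_mul_self (s := x - 1) (by linarith) ht₀ ht₁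
  rw [add_sub_cancel] at this
  linarith

namespace Matrix.IsHermitian

variable {n 𝕜 : Type*} [Fintype n] [DecidableEq n] [RCLike 𝕜] {A : Matrix n n 𝕜}

theorem det_cfc (hA : A.IsHermitian) (f : ℝ → ℝ) :
    (cfc f A).det = ∏ i, (f (hA.eigenvalues i) : 𝕜) := by
  rw [det_eq_sign_charpoly_coeff, hA.charpoly_cfc_eq, Polynomial.coeff_zero_eq_eval_zero,
    Polynomial.eval_prod]
  simp [Finset.prod_neg, ← mul_assoc, ← mul_pow]

theorem cfc_mul_add_const (hA : A.IsHermitian) (a b : ℝ) :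
    cfc (fun x => a * x + b) A = a • A + b • (1 : Matrix n n 𝕜) := by
  rw [cfc_add_const b _ A (ha := hA.isSelfAdjoint), cfc_const_mul_id a A hA.isSelfAdjoint,
    Algebra.algebraMap_eq_smul_one]

theorem det_smul_add_smul_one (hA : A.IsHermitian) (a b : ℝ) :
    (a • A + b • (1 : Matrix n n 𝕜)).det = ∏ i, ((a * hA.eigenvalues i + b : ℝ) : 𝕜) := by
  rw [← hA.cfc_mul_add_const, hA.det_cfc]

end Matrix.IsHermitian

/-- Concavity consequence of `det^{1/d}`: for a symmetric positive semidefinite real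
`d×d` matrix `A` and `t ∈ [0,1]`, `det(tA + (1−t)Id) ≥ (det A)^t`. -/
theorem stmt12 (d : ℕ) (A : Matrix (Fin d) (Fin d) ℝ) (hA : A.PosSemidef)
    (t : ℝ) (ht : t ∈ Set.Icc (0:ℝ) 1) :
    (t • A + (1 - t) • (1 : Matrix (Fin d) (Fin d) ℝ)).det ≥ A.det ^ t := by
  obtain ⟨ht₀, ht₁⟩ := ht
  have hev := hA.eigenvalues_nonneg
  calc A.det ^ t = (∏ i, hA.isHermitian.eigenvalues i) ^ t := by
        simp [hA.isHermitian.det_eq_prod_eigenvalues]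
    _ = ∏ i, hA.isHermitian.eigenvalues i ^ t :=
        (Real.finsetProd_rpow _ _ (fun i _ => hev i) t).symm
    _ ≤ ∏ i, (t * hA.isHermitian.eigenvalues i + (1 - t)) :=
        Finset.prod_le_prod (fun i _ => Real.rpow_nonneg (hev i) t)
          fun i _ => Real.rpow_le_mul_add_one_sub (hev i) ht₀ ht₁
    _ = (t • A + (1 - t) • (1 : Matrix (Fin d) (Fin d) ℝ)).det := by
        simp [hA.isHermitian.det_smul_add_smul_one]
end
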